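/- Let $h_{N} = \cosh_{\eta_N}(v) + \sinh_{\eta_N}(\bar{v})$ and $h = \cosh_{\eta}(v) + \sinh_{\eta}(\bar{v})$ for a vector $v$ in a Hilbert space $H$ with conjugation $J$ ($\bar{v} = Jv$) and Hilbert-Schmidt operators $\eta_N, \eta$ with $\|\eta_N\|_{HS}, \|\eta\|_{HS} \le R$. Then there exists $C = C(R)$ such that $\|h_N - h\| \le C\,\|v\|\,\|\eta_N - \eta\|_{HS}$. -/

import Mathlib

/-!
The Hilbert–Schmidt norm dominates the operator norm (expand `x` in the basis and apply
Cauchy–Schwarz to `T x = ∑ ⟪b i, x⟫ T (b i)`), so it suffices to argue with operator norms.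
We have `cosh_η = f(η η̄)` and `sinh_η = g(η η̄) η` for power series `f`, `g` whose coefficients
are bounded by `1/n!`. Since `‖Aⁿ - Bⁿ‖ ≤ n cⁿ⁻¹ ‖A - B‖` on the ball of radius `c`, such a
series is bounded by `exp c` and Lipschitz with constant `exp c` there, and finally
`‖η_N η̄_N - η η̄‖ ≤ 2R ‖η_N - η‖_HS`.
-/

open scoped ENNReal

/-- The Hilbert-Schmidt norm of an operator `T`, computed with respect to a
Hilbert basis `b` of the (separable) Hilbert space `H`. -/
noncomputable def hsNorm {ι H : Type*} [NormedAddCommGroup H] [InnerProductSpace ℂ H]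
    [CompleteSpace H] (b : HilbertBasis ι ℂ H) (T : H →L[ℂ] H) : ℝ≥0∞ :=
  (∑' i, (‖T (b i)‖₊ : ℝ≥0∞) ^ 2) ^ ((1 : ℝ) / 2)

/-- `cosh_η = ∑_{n ≥ 0} (1/(2n)!) (η η̄)^n`, where `η̄` is the conjugate of `η`. -/
noncomputable def coshOp {H : Type*} [NormedAddCommGroup H] [InnerProductSpace ℂ H]
    [CompleteSpace H] (η ηbar : H →L[ℂ] H) : H →L[ℂ] H :=
  ∑' n : ℕ, (((2 * n).factorial : ℝ)⁻¹) • (η * ηbar) ^ n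

/-- `sinh_η = ∑_{n ≥ 0} (1/(2n+1)!) (η η̄)^n η`. -/
noncomputable def sinhOp {H : Type*} [NormedAddCommGroup H] [InnerProductSpace ℂ H]
    [CompleteSpace H] (η ηbar : H →L[ℂ] H) : H →L[ℂ] H :=
  ∑' n : ℕ, (((2 * n + 1).factorial : ℝ)⁻¹) • ((η * ηbar) ^ n * η)

open scoped Nat

section HilbertSchmidt
variable {ι H : Type*} [NormedAddCommGroup H] [InnerProductSpace ℂ H] [CompleteSpace H]
  (b : HilbertBasis ι ℂ H)

theorem toReal_hsNorm (T : H →L[ℂ] H) :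
    (hsNorm b T).toReal = √(∑' i, ‖T (b i)‖ ^ 2) := by
  rw [hsNorm, ← ENNReal.toReal_rpow, ENNReal.tsum_toReal_eq (fun _ => by simp),
    Real.sqrt_eq_rpow]
  simp

theorem hsNorm_ne_top_iff (T : H →L[ℂ] H) :
    hsNorm b T ≠ ⊤ ↔ Summable (fun i => ‖T (b i)‖ ^ 2) := by
  rw [hsNorm, Ne, ENNReal.rpow_eq_top_iff_of_pos (by norm_num), ← Ne]
  simp_rw [← ENNReal.coe_pow, ENNReal.tsum_coe_ne_top_iff_summable, ← NNReal.summable_coe]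
  simp

theorem hasSum_sq_toReal_hsNorm {T : H →L[ℂ] H} (hT : hsNorm b T ≠ ⊤) :
    HasSum (fun i => ‖T (b i)‖ ^ 2) ((hsNorm b T).toReal ^ 2) := by
  rw [toReal_hsNorm, Real.sq_sqrt (tsum_nonneg fun _ => by positivity)]
  exact ((hsNorm_ne_top_iff b T).1 hT).hasSum

omit [CompleteSpace H] in
theorem HilbertBasis.hasSum_norm_repr_sq (x : H) :
    HasSum (fun i => ‖b.repr x i‖ ^ 2) (‖x‖ ^ 2) := by
  simpa [b.repr.norm_map] using lp.hasSum_norm (p := 2) (by norm_num) (b.repr x)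

theorem norm_apply_le_toReal_hsNorm_mul {T : H →L[ℂ] H} (hT : hsNorm b T ≠ ⊤) (x : H) :
    ‖T x‖ ≤ (hsNorm b T).toReal * ‖x‖ := by
  have hTx : HasSum (fun i => b.repr x i • T (b i)) (T x) := by
    simpa using (b.hasSum_repr x).mapL T
  obtain ⟨C, -, hC, hsum⟩ := Real.inner_le_Lp_mul_Lq_hasSum_of_nonneg .two_two
    (norm_nonneg x) ENNReal.toReal_nonneg (fun i => norm_nonneg (b.repr x i))
    (fun i => norm_nonneg (T (b i))) (by simpa using b.hasSum_norm_repr_sq x)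
    (by simpa using hasSum_sq_toReal_hsNorm b hT)
  calc ‖T x‖ = ‖∑' i, b.repr x i • T (b i)‖ := by rw [hTx.tsum_eq]
    _ ≤ C := tsum_of_norm_bounded hsum fun i => (norm_smul _ _).le
    _ ≤ (hsNorm b T).toReal * ‖x‖ := hC.trans_eq (mul_comm _ _)

theorem opNorm_le_toReal_hsNorm {T : H →L[ℂ] H} (hT : hsNorm b T ≠ ⊤) :
    ‖T‖ ≤ (hsNorm b T).toReal :=
  T.opNorm_le_bound ENNReal.toReal_nonneg (norm_apply_le_toReal_hsNorm_mul b hT)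

theorem opNorm_le_of_hsNorm_le_ofReal {T : H →L[ℂ] H} {R : ℝ} (hR : 0 ≤ R)
    (hT : hsNorm b T ≤ ENNReal.ofReal R) : ‖T‖ ≤ R := by
  have hfin : hsNorm b T ≠ ⊤ := ne_top_of_le_ne_top ENNReal.ofReal_ne_top hT
  calc ‖T‖ ≤ (hsNorm b T).toReal := opNorm_le_toReal_hsNorm b hfin
    _ ≤ R := ENNReal.toReal_le_of_le_ofReal hR hT

theorem hsNorm_sub_ne_top {S T : H →L[ℂ] H} (hS : hsNorm b S ≠ ⊤) (hT : hsNorm b T ≠ ⊤) :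
    hsNorm b (S - T) ≠ ⊤ := by
  rw [hsNorm_ne_top_iff] at hS hT ⊢
  refine ((hS.mul_left 2).add (hT.mul_left 2)).of_nonneg_of_le (fun _ => by positivity)
    fun i => ?_
  have htri := norm_sub_le (S (b i)) (T (b i))
  simp only [sub_apply]
  nlinarith [norm_nonneg (S (b i) - T (b i)), sq_nonneg (‖S (b i)‖ - ‖T (b i)‖)]

end HilbertSchmidt

theorem norm_mul_sub_mul_le {R : Type*} [NonUnitalSeminormedRing R] (a a' b b' : R) :
    ‖a * b - a' * b'‖ ≤ ‖a‖ * ‖b - b'‖ + ‖a - a'‖ * ‖b'‖ := by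
  rw [show a * b - a' * b' = a * (b - b') + (a - a') * b' by noncomm_ring]
  exact (norm_add_le _ _).trans (add_le_add (norm_mul_le _ _) (norm_mul_le _ _))

namespace ContinuousLinearMap

variable {E : Type*} [NormedAddCommGroup E] [NormedSpace ℂ E] {c : ℝ}

theorem norm_pow_le_of_le {T : E →L[ℂ] E} (hT : ‖T‖ ≤ c) (n : ℕ) : ‖T ^ n‖ ≤ c ^ n := by
  induction n with
  | zero => simpa [one_def] using norm_id_le
  | succ n ih =>
    rw [pow_succ, pow_succ]
    exact (norm_mul_le _ _).trans (mul_le_mul ih hT (norm_nonneg _) ((norm_nonneg _).trans ih))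

theorem norm_pow_sub_pow_le {S T : E →L[ℂ] E} (hS : ‖S‖ ≤ c) (hT : ‖T‖ ≤ c) (n : ℕ) :
    ‖S ^ n - T ^ n‖ ≤ n * c ^ (n - 1) * ‖S - T‖ := by
  have hc : 0 ≤ c := (norm_nonneg _).trans hS
  induction n with
  | zero => simp
  | succ n ih =>
    have hpow : c * (n * c ^ (n - 1)) = n * c ^ n := by
      cases n <;> simp [pow_succ]; ring
    calc ‖S ^ (n + 1) - T ^ (n + 1)‖
        ≤ ‖S‖ * ‖S ^ n - T ^ n‖ + ‖S - T‖ * ‖T ^ n‖ := by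
          rw [pow_succ', pow_succ']; exact norm_mul_sub_mul_le _ _ _ _
      _ ≤ c * (n * c ^ (n - 1) * ‖S - T‖) + ‖S - T‖ * c ^ n := by
          gcongr
          exact norm_pow_le_of_le hT n
      _ = (n + 1 : ℕ) * c ^ (n + 1 - 1) * ‖S - T‖ := by
          rw [Nat.add_sub_cancel]; push_cast; linear_combination ‖S - T‖ * hpow

end ContinuousLinearMap

theorem Real.hasSum_mul_pow_sub_one_div_factorial (c : ℝ) :
    HasSum (fun n : ℕ => n * c ^ (n - 1) / n !) (Real.exp c) := by
  have hexp : HasSum (fun n : ℕ => c ^ n / n !) (Real.exp c) :=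
    Real.exp_eq_exp_ℝ ▸ NormedSpace.expSeries_div_hasSum_exp c
  refine (hasSum_nat_add_iff' 1).1 ?_
  have hshift : ∀ n : ℕ, ((n + 1 : ℕ) : ℝ) * c ^ (n + 1 - 1) / (n + 1)! = c ^ n / n ! := by
    intro n
    rw [Nat.factorial_succ, Nat.add_sub_cancel]
    push_cast
    field_simp
  simp only [hshift, Finset.sum_range_one, CharP.cast_eq_zero, zero_mul, zero_div, sub_zero]
  exact hexp

section ExpBoundedSeries

variable {E : Type*} [NormedAddCommGroup E] [NormedSpace ℂ E] [CompleteSpace E] {c : ℝ}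
  {a : ℕ → ℝ}

omit [CompleteSpace E] in
theorem norm_smul_pow_le_of_abs_le_inv_factorial (ha : ∀ n, |a n| ≤ (n ! : ℝ)⁻¹)
    {T : E →L[ℂ] E} (hT : ‖T‖ ≤ c) (n : ℕ) : ‖a n • T ^ n‖ ≤ c ^ n / n ! := by
  rw [norm_smul, Real.norm_eq_abs, div_eq_inv_mul]
  exact mul_le_mul (ha n) (T.norm_pow_le_of_le hT n) (norm_nonneg _) (by positivity)

theorem summable_smul_pow_of_abs_le_inv_factorial (ha : ∀ n, |a n| ≤ (n ! : ℝ)⁻¹)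
    {T : E →L[ℂ] E} (hT : ‖T‖ ≤ c) : Summable (fun n => a n • T ^ n) :=
  .of_norm_bounded (Real.summable_pow_div_factorial c)
    (norm_smul_pow_le_of_abs_le_inv_factorial ha hT)

omit [CompleteSpace E] in
theorem norm_tsum_smul_pow_le_exp (ha : ∀ n, |a n| ≤ (n ! : ℝ)⁻¹) {T : E →L[ℂ] E}
    (hT : ‖T‖ ≤ c) : ‖∑' n, a n • T ^ n‖ ≤ Real.exp c :=
  tsum_of_norm_bounded (Real.exp_eq_exp_ℝ ▸ NormedSpace.expSeries_div_hasSum_exp c)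
    (norm_smul_pow_le_of_abs_le_inv_factorial ha hT)

theorem norm_tsum_smul_pow_sub_le (ha : ∀ n, |a n| ≤ (n ! : ℝ)⁻¹) {S T : E →L[ℂ] E}
    (hS : ‖S‖ ≤ c) (hT : ‖T‖ ≤ c) :
    ‖∑' n, a n • S ^ n - ∑' n, a n • T ^ n‖ ≤ Real.exp c * ‖S - T‖ := by
  rw [← (summable_smul_pow_of_abs_le_inv_factorial ha hS).tsum_sub
    (summable_smul_pow_of_abs_le_inv_factorial ha hT)]
  refine tsum_of_norm_bounded ((Real.hasSum_mul_pow_sub_one_div_factorial c).mul_right _)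
    fun n => ?_
  rw [← smul_sub, norm_smul, Real.norm_eq_abs, div_eq_inv_mul, mul_assoc]
  exact mul_le_mul (ha n) (S.norm_pow_sub_pow_le hS hT n) (norm_nonneg _) (by positivity)

end ExpBoundedSeries

theorem abs_inv_factorial_le_of_le {m n : ℕ} (h : n ≤ m) : |(m ! : ℝ)⁻¹| ≤ (n ! : ℝ)⁻¹ := by
  rw [abs_of_pos (by positivity)]
  exact inv_anti₀ (by positivity) (by exact_mod_cast Nat.factorial_le h)

section Bogoliubov

variable {H : Type*} [NormedAddCommGroup H] [InnerProductSpace ℂ H] [CompleteSpace H]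
  {η ηbar η' ηbar' : H →L[ℂ] H} {c : ℝ}

theorem sinhOp_eq_tsum_mul (η ηbar : H →L[ℂ] H) :
    sinhOp η ηbar = (∑' n : ℕ, ((2 * n + 1)! : ℝ)⁻¹ • (η * ηbar) ^ n) * η := by
  have hsum := summable_smul_pow_of_abs_le_inv_factorial
    (fun n => abs_inv_factorial_le_of_le (by omega : n ≤ 2 * n + 1)) le_rfl (T := η * ηbar)
  simp_rw [sinhOp, ← smul_mul_assoc]
  exact hsum.tsum_mul_right η

theorem norm_coshOp_sub_le (hA : ‖η * ηbar‖ ≤ c) (hA' : ‖η' * ηbar'‖ ≤ c) :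
    ‖coshOp η ηbar - coshOp η' ηbar'‖ ≤ Real.exp c * ‖η * ηbar - η' * ηbar'‖ :=
  norm_tsum_smul_pow_sub_le (fun n => abs_inv_factorial_le_of_le (by omega)) hA hA'

theorem norm_sinhOp_sub_le (hA : ‖η * ηbar‖ ≤ c) (hA' : ‖η' * ηbar'‖ ≤ c) :
    ‖sinhOp η ηbar - sinhOp η' ηbar'‖ ≤
      Real.exp c * ‖η - η'‖ + Real.exp c * ‖η * ηbar - η' * ηbar'‖ * ‖η'‖ := by
  have ha : ∀ n : ℕ, |((2 * n + 1)! : ℝ)⁻¹| ≤ (n ! : ℝ)⁻¹ :=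
    fun n => abs_inv_factorial_le_of_le (by omega)
  rw [sinhOp_eq_tsum_mul, sinhOp_eq_tsum_mul]
  refine (norm_mul_sub_mul_le _ _ _ _).trans (add_le_add ?_ ?_)
  · exact mul_le_mul_of_nonneg_right (norm_tsum_smul_pow_le_exp ha hA) (norm_nonneg _)
  · exact mul_le_mul_of_nonneg_right (norm_tsum_smul_pow_sub_le ha hA hA') (norm_nonneg _)

theorem norm_bogoliubov_sub_le {r d : ℝ} {ηN ηNbar : H →L[ℂ] H} (v vb : H)
    (hηN : ‖ηN‖ ≤ r) (hηNbar : ‖ηNbar‖ ≤ r) (hη : ‖η‖ ≤ r) (hηbar : ‖ηbar‖ ≤ r)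
    (hd : ‖ηN - η‖ ≤ d) (hdbar : ‖ηNbar - ηbar‖ ≤ d) (hvb : ‖vb‖ = ‖v‖) :
    ‖(coshOp ηN ηNbar) v + (sinhOp ηN ηNbar) vb - ((coshOp η ηbar) v + (sinhOp η ηbar) vb)‖
      ≤ Real.exp (r ^ 2) * (1 + 2 * r + 2 * r ^ 2) * ‖v‖ * d := by
  have hr : 0 ≤ r := (norm_nonneg _).trans hη
  have hd0 : 0 ≤ d := (norm_nonneg _).trans hd
  have hprod : ∀ {S T : H →L[ℂ] H}, ‖S‖ ≤ r → ‖T‖ ≤ r → ‖S * T‖ ≤ r ^ 2 := fun hS hT =>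
    (norm_mul_le _ _).trans (sq r ▸ mul_le_mul hS hT (norm_nonneg _) hr)
  have hdiff : ‖ηN * ηNbar - η * ηbar‖ ≤ 2 * r * d := by
    have hsplit := norm_mul_sub_mul_le ηN η ηNbar ηbar
    nlinarith [norm_nonneg ηN, norm_nonneg ηbar, norm_nonneg (ηN - η)]
  have hcosh : ‖coshOp ηN ηNbar - coshOp η ηbar‖ ≤ Real.exp (r ^ 2) * (2 * r * d) :=
    (norm_coshOp_sub_le (hprod hηN hηNbar) (hprod hη hηbar)).trans (by gcongr)
  have hsinh : ‖sinhOp ηN ηNbar - sinhOp η ηbar‖ ≤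
      Real.exp (r ^ 2) * d + Real.exp (r ^ 2) * (2 * r * d) * r :=
    (norm_sinhOp_sub_le (hprod hηN hηNbar) (hprod hη hηbar)).trans (by gcongr)
  calc _ = ‖(coshOp ηN ηNbar - coshOp η ηbar) v + (sinhOp ηN ηNbar - sinhOp η ηbar) vb‖ := by
        simp only [sub_apply]; abel_nf
    _ ≤ ‖coshOp ηN ηNbar - coshOp η ηbar‖ * ‖v‖ + ‖sinhOp ηN ηNbar - sinhOp η ηbar‖ * ‖vb‖ :=
        (norm_add_le _ _).trans
          (add_le_add (ContinuousLinearMap.le_opNorm _ _) (ContinuousLinearMap.le_opNorm _ _))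
    _ = (‖coshOp ηN ηNbar - coshOp η ηbar‖ + ‖sinhOp ηN ηNbar - sinhOp η ηbar‖) * ‖v‖ := by
        rw [hvb, add_mul]
    _ ≤ (Real.exp (r ^ 2) * (2 * r * d) + (Real.exp (r ^ 2) * d +
          Real.exp (r ^ 2) * (2 * r * d) * r)) * ‖v‖ := by gcongr
    _ = Real.exp (r ^ 2) * (1 + 2 * r + 2 * r ^ 2) * ‖v‖ * d := by ring

end Bogoliubov

/-- `vb` stands for `v̄ = J v`, and `ηNbar`, `ηbar` for the conjugate kernels `J η_N J`, `J η J`. -/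
theorem bogoliubov_test_function_stability_general {ι H : Type*} [NormedAddCommGroup H]
    [InnerProductSpace ℂ H] [CompleteSpace H] (R : ℝ) (hR : 0 ≤ R) :
    ∃ C : ℝ, 0 < C ∧
      ∀ (b : HilbertBasis ι ℂ H) (v vb : H) (ηN ηNbar η ηbar : H →L[ℂ] H),
        ‖vb‖ = ‖v‖ →
        hsNorm b ηN ≤ ENNReal.ofReal R → hsNorm b η ≤ ENNReal.ofReal R →
        hsNorm b ηNbar = hsNorm b ηN → hsNorm b ηbar = hsNorm b η →
        hsNorm b (ηNbar - ηbar) = hsNorm b (ηN - η) →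
        ‖(coshOp ηN ηNbar) v + (sinhOp ηN ηNbar) vb
            - ((coshOp η ηbar) v + (sinhOp η ηbar) vb)‖
          ≤ C * ‖v‖ * (hsNorm b (ηN - η)).toReal := by
  refine ⟨Real.exp (R ^ 2) * (1 + 2 * R + 2 * R ^ 2), by positivity, ?_⟩
  intro b v vb ηN ηNbar η ηbar hvb hηN hη hηNbar hηbar hdbar
  have hfin : hsNorm b (ηN - η) ≠ ⊤ :=
    hsNorm_sub_ne_top b (ne_top_of_le_ne_top ENNReal.ofReal_ne_top hηN)
      (ne_top_of_le_ne_top ENNReal.ofReal_ne_top hη)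
  exact norm_bogoliubov_sub_le v vb (opNorm_le_of_hsNorm_le_ofReal b hR hηN)
    (opNorm_le_of_hsNorm_le_ofReal b hR (hηNbar ▸ hηN)) (opNorm_le_of_hsNorm_le_ofReal b hR hη)
    (opNorm_le_of_hsNorm_le_ofReal b hR (hηbar ▸ hη)) (opNorm_le_toReal_hsNorm b hfin)
    (hdbar ▸ opNorm_le_toReal_hsNorm b (hdbar ▸ hfin)) hvb

/-- Stability of Bogoliubov-transformed test functions
`h_N = cosh_{η_N}(v) + sinh_{η_N}(v̄)`, `h = cosh_η(v) + sinh_η(v̄)` under perturbation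
of the Hilbert-Schmidt kernel: if `‖η_N‖_HS, ‖η‖_HS ≤ R` then there is `C = C(R)` with
`‖h_N - h‖ ≤ C ‖v‖ ‖η_N - η‖_HS`.  Here `v̄ = Jv` with `J` the conjugation, so
`‖v̄‖ = ‖v‖`, and the conjugate kernels `η̄` satisfy `‖η̄‖_HS = ‖η‖_HS` and
`‖η̄_N - η̄‖_HS = ‖η_N - η‖_HS`. -/
theorem bogoliubov_test_function_stability {ι H : Type*} [NormedAddCommGroup H]
    [InnerProductSpace ℂ H] [CompleteSpace H] [Countable ι] (R : ℝ) (hR : 0 ≤ R) :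
    ∃ C : ℝ, 0 < C ∧
      ∀ (b : HilbertBasis ι ℂ H) (v vb : H) (ηN ηNbar η ηbar : H →L[ℂ] H),
        ‖vb‖ = ‖v‖ →
        hsNorm b ηN ≤ ENNReal.ofReal R → hsNorm b η ≤ ENNReal.ofReal R →
        hsNorm b ηNbar = hsNorm b ηN → hsNorm b ηbar = hsNorm b η →
        hsNorm b (ηNbar - ηbar) = hsNorm b (ηN - η) →
        ‖(coshOp ηN ηNbar) v + (sinhOp ηN ηNbar) vb
            - ((coshOp η ηbar) v + (sinhOp η ηbar) vb)‖
          ≤ C * ‖v‖ * (hsNorm b (ηN - η)).toReal :=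
  bogoliubov_test_function_stability_general R hR
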